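/- arXiv:2201.08312 — 2 statements merged into one kernel-verified Lean document; each statement's English description precedes it below -/
import Mathlib

section
/- Let H be a subgroup of a finitely generated group G such that Cone^ω_G(H) is connected for all non-principal ultrafilters ω and all scaling sequences. Then H is finitely generated. -/
open Filter

/-- An ultrafilter on `ℕ` is non-principal iff it contains the cofinite filter. -/
def Nonprincipal (ω : Ultrafilter ℕ) : Prop := (ω : Filter ℕ) ≤ Filter.cofinite

/-- Admissible sequences for the asymptotic cone with scaling sequence `c` (with
`c i > 0`): sequences at bounded scaled distance from the observation point `s`.
The ultrafilter `ω` is a parameter fixing the pseudometric below. -/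
structure PreconeC (S : Type*) [MetricSpace S] (s : S) (ω : Ultrafilter ℕ)
    (c : ℕ → ℝ) (hc : ∀ i, 0 < c i) : Type _ where
  seq : ℕ → S
  bounded : ∃ B : ℝ, ∀ i : ℕ, 1 ≤ i → dist s (seq i) ≤ B * c i

namespace PreconeC

variable {S : Type*} [MetricSpace S] {s : S} {ω : Ultrafilter ℕ} {c : ℕ → ℝ}
  {hc : ∀ i, 0 < c i}

lemma bounded_div (x y : PreconeC S s ω c hc) :
    ∃ B : ℝ, ∀ i : ℕ, 1 ≤ i → dist (x.seq i) (y.seq i) / c i ∈ Set.Icc (0:ℝ) B := by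
  obtain ⟨Bx, hBx⟩ := x.bounded
  obtain ⟨By, hBy⟩ := y.bounded
  refine ⟨max (Bx + By) 0, fun i hi1 => ⟨div_nonneg dist_nonneg (le_of_lt (hc i)), ?_⟩⟩
  have hi : (0:ℝ) < c i := hc i
  have h1 : dist (x.seq i) (y.seq i) ≤ (Bx + By) * c i := by
    calc dist (x.seq i) (y.seq i) ≤ dist s (x.seq i) + dist s (y.seq i) :=
          dist_triangle_left _ _ _
      _ ≤ Bx * c i + By * c i := add_le_add (hBx i hi1) (hBy i hi1)
      _ = (Bx + By) * c i := by ring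
  have h2 : dist (x.seq i) (y.seq i) / c i ≤ ((Bx + By) * c i) / c i := by gcongr
  have h3 : ((Bx + By) * c i : ℝ) / c i = Bx + By := mul_div_cancel_right₀ _ (ne_of_gt hi)
  rw [h3] at h2
  exact le_trans h2 (le_max_left _ _)

/-- The `ω`-limit defining the cone pseudometric exists. -/
lemma tendsto_pdist (hω : True) (x y : PreconeC S s ω c hc) :
    Tendsto (fun i => dist (x.seq i) (y.seq i) / c i) (ω : Filter ℕ)
      (nhds (limUnder (ω : Filter ℕ) (fun i => dist (x.seq i) (y.seq i) / c i))) := by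
  obtain ⟨B, hB⟩ := bounded_div x y
  have hB0 : (0:ℝ) ≤ B := (hB 1 le_rfl).2.trans' (hB 1 le_rfl).1
  set B' := max B (dist (x.seq 0) (y.seq 0) / c 0) with hB'
  have hle : (ω.map (fun i => dist (x.seq i) (y.seq i) / c i) : Filter ℝ) ≤
      Filter.principal (Set.Icc 0 B') := by
    rw [Filter.le_principal_iff]
    refine Filter.mem_map.2 (Filter.univ_mem' fun i => ?_)
    rcases Nat.eq_zero_or_pos i with h | h
    · subst h
      exact ⟨div_nonneg dist_nonneg (le_of_lt (hc 0)), le_max_right _ _⟩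
    · exact ⟨(hB i h).1, (hB i h).2.trans (le_max_left _ _)⟩
  obtain ⟨l, -, hl⟩ := isCompact_Icc.ultrafilter_le_nhds
    (ω.map (fun i => dist (x.seq i) (y.seq i) / c i)) hle
  exact tendsto_nhds_limUnder ⟨l, hl⟩

end PreconeC

/-- The pseudometric `d^ω((xᵢ),(yᵢ)) = limᵂ d(xᵢ,yᵢ)/cᵢ` on admissible sequences. -/
noncomputable instance preconeCPseudoMetric (S : Type*) [MetricSpace S] (s : S)
    (ω : Ultrafilter ℕ) (c : ℕ → ℝ) (hc : ∀ i, 0 < c i) :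
    PseudoMetricSpace (PreconeC S s ω c hc) where
  dist x y := limUnder (ω : Filter ℕ) (fun i => dist (x.seq i) (y.seq i) / c i)
  dist_self x := by
    have h : (fun i : ℕ => dist (x.seq i) (x.seq i) / c i) = fun _ => (0 : ℝ) := by
      funext i; simp
    show limUnder (ω : Filter ℕ) _ = 0
    rw [h]
    exact tendsto_const_nhds.limUnder_eq
  dist_comm x y := by
    show limUnder _ _ = limUnder _ _
    congr 1
    funext i
    rw [dist_comm]
  dist_triangle x y z := by
    show limUnder (ω : Filter ℕ) _ ≤ limUnder _ _ + limUnder _ _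
    have hxz := x.tendsto_pdist trivial z
    have hxy := x.tendsto_pdist trivial y
    have hyz := y.tendsto_pdist trivial z
    refine le_of_tendsto_of_tendsto hxz (hxy.add hyz) (Filter.univ_mem' fun i => ?_)
    have h1 : dist (x.seq i) (z.seq i) ≤
        dist (x.seq i) (y.seq i) + dist (y.seq i) (z.seq i) := dist_triangle _ _ _
    have hi : (0:ℝ) < c i := hc i
    calc dist (x.seq i) (z.seq i) / c i
        ≤ (dist (x.seq i) (y.seq i) + dist (y.seq i) (z.seq i)) / c i := by gcongr
      _ = dist (x.seq i) (y.seq i) / c i + dist (y.seq i) (z.seq i) / c i := add_div _ _ _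

/-- The asymptotic cone of `(S, s)` with respect to `ω` and the scaling sequence `c`. -/
abbrev ConeC (S : Type*) [MetricSpace S] (s : S) (ω : Ultrafilter ℕ) (c : ℕ → ℝ)
    (hc : ∀ i, 0 < c i) : Type _ :=
  SeparationQuotient (PreconeC S s ω c hc)

/-- `Cone^ω_S(T)`: points of the asymptotic cone with a representative sequence all of
whose components lie in `T`. -/
def coneSetC {S : Type*} [MetricSpace S] (s : S) (ω : Ultrafilter ℕ) (c : ℕ → ℝ)
    (hc : ∀ i, 0 < c i) (T : Set S) : Set (ConeC S s ω c hc) :=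
  {p | ∃ x : PreconeC S s ω c hc, (∀ i, x.seq i ∈ T) ∧ SeparationQuotient.mk x = p}

/-- `g` is a product of `k` elements of `A ∪ A⁻¹`. -/
def IsWord {G : Type*} [Group G] (A : Set G) (k : ℕ) (g : G) : Prop :=
  ∃ l : List G, l.length = k ∧ (∀ x ∈ l, x ∈ A ∨ x⁻¹ ∈ A) ∧ l.prod = g

/-- Word length of `g` with respect to the generating set `A`. -/
noncomputable def wlen {G : Type*} [Group G] (A : Set G) (g : G) : ℕ :=
  sInf {k : ℕ | IsWord A k g}

/-- Every group element is a word over a generating set. -/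
lemma exists_isWord {G : Type*} [Group G] {X : Set G} (hXgen : Subgroup.closure X = ⊤)
    (g : G) : ∃ k, IsWord X k g := by
  have hg0 : g ∈ (Subgroup.closure X).toSubmonoid :=
    (Subgroup.mem_toSubmonoid _ _).2 (by rw [hXgen]; trivial)
  rw [Subgroup.closure_toSubmonoid] at hg0
  obtain ⟨lst, hlmem, hlprod⟩ := Submonoid.exists_list_of_mem_closure hg0
  refine ⟨lst.length, lst, rfl, fun x hx => ?_, hlprod⟩
  rcases hlmem x hx with h | h
  · exact Or.inl h
  · exact Or.inr (Set.mem_inv.1 h)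

lemma isWord_wlen {G : Type*} [Group G] {X : Set G} (hXgen : Subgroup.closure X = ⊤)
    (g : G) : IsWord X (wlen X g) g :=
  Nat.sInf_mem (exists_isWord hXgen g)

/-- Balls for the word length are finite. -/
lemma wlen_ball_finite {G : Type*} [Group G] {X : Set G} (hX : X.Finite)
    (hXgen : Subgroup.closure X = ⊤) (N : ℕ) : {g : G | wlen X g ≤ N}.Finite := by
  classical
  have hAfin : (X ∪ X⁻¹ : Set G).Finite := hX.union hX.inv
  have hW : ∀ n : ℕ,
      {g : G | ∃ lst : List G, lst.length ≤ n ∧ (∀ x ∈ lst, x ∈ X ∪ X⁻¹) ∧ lst.prod = g}.Finite := by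
    intro n
    induction n with
    | zero =>
      apply Set.Finite.subset (Set.finite_singleton (1 : G))
      rintro g ⟨lst, hlen, -, hprod⟩
      have : lst = [] := List.length_eq_zero_iff.1 (Nat.le_zero.1 hlen)
      subst this
      simp only [List.prod_nil] at hprod
      simp [← hprod]
    | succ n ih =>
      apply Set.Finite.subset (ih.union (hAfin.mul ih))
      rintro g ⟨lst, hlen, hmem, hprod⟩
      cases lst with
      | nil => exact Or.inl ⟨[], by simp, by simp, hprod⟩
      | cons x t =>
        right
        have hx : x ∈ X ∪ X⁻¹ := hmem x (List.mem_cons_self (a := x) (l := t))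
        have ht : t.prod ∈
            {g : G | ∃ lst : List G, lst.length ≤ n ∧ (∀ x ∈ lst, x ∈ X ∪ X⁻¹) ∧ lst.prod = g} :=
          ⟨t, by simpa using hlen, fun y hy => hmem y (List.mem_cons_of_mem _ hy), rfl⟩
        have hg : g = x * t.prod := by rw [← hprod]; simp
        rw [hg]
        exact Set.mul_mem_mul hx ht
  apply (hW N).subset
  intro g hg
  obtain ⟨lst, hlen, hmem, hprod⟩ := isWord_wlen hXgen g
  refine ⟨lst, by rw [hlen]; exact hg, fun x hx => ?_, hprod⟩
  rcases hmem x hx with h | h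
  · exact Set.mem_union_left _ h
  · exact Set.mem_union_right _ (Set.mem_inv.2 h)

/-- A connected subset of a metric space is well-chained: any two of its points are
joined by an `ε`-chain inside the set. -/
lemma exists_chain_of_isConnected {α : Type*} [MetricSpace α] {T : Set α}
    (hT : IsConnected T) {x y : α} (hx : x ∈ T) (hy : y ∈ T) {ε : ℝ} (hε : 0 < ε) :
    ∃ (m : ℕ) (f : ℕ → α), (∀ k, f k ∈ T) ∧ f 0 = x ∧ f m = y ∧
      ∀ k < m, dist (f k) (f (k + 1)) < ε := by
  haveI : PreconnectedSpace T := Subtype.preconnectedSpace hT.isPreconnected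
  set U : Set T := {z | ∃ (m : ℕ) (f : ℕ → T), f 0 = ⟨x, hx⟩ ∧ f m = z ∧
    ∀ k < m, dist (f k) (f (k + 1)) < ε} with hU
  have extend : ∀ z w : T, z ∈ U → dist z w < ε → w ∈ U := by
    rintro z w ⟨m, f, h0, hm, hch⟩ hzw
    refine ⟨m + 1, fun k => if k ≤ m then f k else w, ?_, ?_, ?_⟩
    · show (if 0 ≤ m then f 0 else w) = ⟨x, hx⟩
      rw [if_pos (Nat.zero_le m)]; exact h0
    · show (if m + 1 ≤ m then f (m + 1) else w) = w
      rw [if_neg (by omega)]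
    · intro k hk
      show dist (if k ≤ m then f k else w) (if k + 1 ≤ m then f (k + 1) else w) < ε
      rcases Nat.lt_succ_iff_lt_or_eq.1 hk with hk' | rfl
      · rw [if_pos (by omega : k ≤ m), if_pos (by omega : k + 1 ≤ m)]; exact hch k hk'
      · rw [if_pos le_rfl, if_neg (by omega), hm]; exact hzw
  have hopen : IsOpen U := by
    rw [Metric.isOpen_iff]
    intro z hz
    exact ⟨ε, hε, fun w hw =>
      extend z w hz (by rw [dist_comm]; exact Metric.mem_ball.1 hw)⟩
  have hclosed : IsClosed U := by
    rw [← isOpen_compl_iff, Metric.isOpen_iff]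
    intro z hz
    exact ⟨ε, hε, fun w hw hwU => hz (extend w z hwU (Metric.mem_ball.1 hw))⟩
  have hUuniv : U = Set.univ :=
    IsClopen.eq_univ ⟨hclosed, hopen⟩ ⟨⟨x, hx⟩, 0, fun _ => ⟨x, hx⟩, rfl, rfl, by omega⟩
  have hyU : (⟨y, hy⟩ : T) ∈ U := hUuniv ▸ Set.mem_univ _
  obtain ⟨m, f, h0, hm, hch⟩ := hyU
  refine ⟨m, fun k => (f k : α), fun k => (f k).2, congrArg Subtype.val h0,
    congrArg Subtype.val hm, fun k hk => ?_⟩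
  rw [← Subtype.dist_eq]
  exact hch k hk

/-- if `G` is a finitely generated group with the word metric and `H` is
a subgroup such that `Cone^ω_G(H)` is connected for all non-principal ultrafilters `ω`
and all scaling sequences (strictly increasing, positive, unbounded), then `H` is
finitely generated. -/
theorem fg_of_coneSet_connected {G : Type*} [Group G] [MetricSpace G]
    (X : Set G) (hXfin : X.Finite) (hXgen : Subgroup.closure X = ⊤)
    (hdist : ∀ g h : G, dist g h = wlen X (g⁻¹ * h))
    (H : Subgroup G)
    (hconn : ∀ ω : Ultrafilter ℕ, Nonprincipal ω → ∀ (c : ℕ → ℝ) (hc : ∀ i, 0 < c i),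
      StrictMono c → (∀ B : ℝ, ∃ i, B < c i) →
      IsConnected (coneSetC (1 : G) ω c hc (H : Set G))) :
    H.FG := by
  classical
  by_contra hnfg
  -- subgroups generated by the elements of `H` of word length at most `N`
  set M : ℕ → Subgroup G := fun N => Subgroup.closure ((H : Set G) ∩ {g | wlen X g ≤ N})
    with hMdef
  have hex : ∀ N : ℕ, ∃ h : G, h ∈ H ∧ h ∉ M N := by
    intro N
    by_contra hcon
    push_neg at hcon
    refine hnfg ((Subgroup.fg_iff H).2 ⟨(H : Set G) ∩ {g | wlen X g ≤ N}, ?_, ?_⟩)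
    · exact le_antisymm ((Subgroup.closure_le H).2 Set.inter_subset_left) hcon
    · exact (wlen_ball_finite hXfin hXgen N).inter_of_right _
  -- minimal-length elements of `H` outside `M N`
  have key : ∀ N : ℕ, ∃ h : G, h ∈ H ∧ h ∉ M N ∧ N < wlen X h ∧
      ∀ b : G, b ∈ H → wlen X b < wlen X h → b ∈ M N := by
    intro N
    obtain ⟨h0, hh0H, hh0M⟩ := hex N
    have hne : {k : ℕ | ∃ g : G, g ∈ H ∧ g ∉ M N ∧ wlen X g = k}.Nonempty :=
      ⟨wlen X h0, h0, hh0H, hh0M, rfl⟩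
    obtain ⟨g, hgH, hgM, hgl⟩ := Nat.sInf_mem hne
    refine ⟨g, hgH, hgM, ?_, ?_⟩
    · by_contra hle
      push_neg at hle
      exact hgM (Subgroup.subset_closure ⟨hgH, hle⟩)
    · intro b hbH hbl
      by_contra hbM
      have h1 : sInf {k : ℕ | ∃ g : G, g ∈ H ∧ g ∉ M N ∧ wlen X g = k} ≤ wlen X b :=
        Nat.sInf_le ⟨b, hbH, hbM, rfl⟩
      omega
  choose hseq hsH hsM hNlt hmin using key
  -- the recursively chosen lengths
  set n : ℕ → ℕ := fun k => Nat.rec 0 (fun _ m => wlen X (hseq m)) k with hn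
  set l : ℕ → ℕ := fun k => wlen X (hseq (n k)) with hl
  have hnsucc : ∀ k, n (k + 1) = l k := fun k => rfl
  have hlgt : ∀ k, n k < l k := fun k => hNlt (n k)
  have hlmono : StrictMono l := by
    apply strictMono_nat_of_lt_succ
    intro k
    have := hlgt (k + 1)
    rwa [hnsucc k] at this
  have hl1 : ∀ k, 0 < l k := fun k => Nat.lt_of_le_of_lt (Nat.zero_le _) (hlgt k)
  set c : ℕ → ℝ := fun i => (l i : ℝ) with hcdef
  have hc : ∀ i, 0 < c i := fun i => by
    show (0 : ℝ) < (l i : ℝ); exact_mod_cast hl1 i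
  have hcmono : StrictMono c := fun a b hab => by
    show (l a : ℝ) < (l b : ℝ); exact_mod_cast hlmono hab
  have hcunb : ∀ B : ℝ, ∃ i, B < c i := by
    intro B
    obtain ⟨m, hm⟩ := exists_nat_gt B
    refine ⟨m, lt_of_lt_of_le hm ?_⟩
    show (m : ℝ) ≤ (l m : ℝ); exact_mod_cast hlmono.le_apply
  -- a nonprincipal ultrafilter
  set ω : Ultrafilter ℕ := Ultrafilter.of Filter.cofinite with hω
  have hnp : Nonprincipal ω := Ultrafilter.of_le _
  have hcone := hconn ω hnp c hc hcmono hcunb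
  -- the two distinguished points of the cone
  set one1 : PreconeC G 1 ω c hc := ⟨fun _ => (1 : G), 0, fun i _ => by simp⟩ with hone1
  set ypre : PreconeC G 1 ω c hc := ⟨fun i => hseq (n i), 1, fun i _ => by
    rw [hdist]
    simp only [inv_one, one_mul, one_mul]
    exact le_of_eq rfl⟩ with hypre
  have hx0mem : SeparationQuotient.mk one1 ∈ coneSetC (1 : G) ω c hc (H : Set G) :=
    ⟨one1, fun _ => H.one_mem, rfl⟩
  have hy0mem : SeparationQuotient.mk ypre ∈ coneSetC (1 : G) ω c hc (H : Set G) :=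
    ⟨ypre, fun i => hsH (n i), rfl⟩
  -- a (1/2)-chain in the cone from the observation point to the limit of the `hseq`
  obtain ⟨m, f, hfT, hf0, hfm, hch⟩ :=
    exists_chain_of_isConnected hcone hx0mem hy0mem (ε := 1/2) (by norm_num)
  have hrep : ∀ k : ℕ, ∃ a : PreconeC G 1 ω c hc,
      (∀ i, a.seq i ∈ H) ∧ SeparationQuotient.mk a = f k := fun k => hfT k
  choose a haH hamk using hrep
  -- scaled distances along the chain are eventually < 1/2
  have tendsto_dist : ∀ u v : PreconeC G 1 ω c hc,
      Filter.Tendsto (fun i => dist (u.seq i) (v.seq i) / c i) (ω : Filter ℕ)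
        (nhds (dist u v)) := fun u v => u.tendsto_pdist trivial v
  have ev0 : ∀ᶠ i in (ω : Filter ℕ), dist ((a 0).seq i) (one1.seq i) / c i < 1/2 := by
    have h00 : SeparationQuotient.mk (a 0) = SeparationQuotient.mk one1 := by
      rw [hamk 0, hf0]
    have hd0 : dist (a 0) one1 = 0 :=
      Metric.inseparable_iff.1 (SeparationQuotient.mk_eq_mk.1 h00)
    have := tendsto_dist (a 0) one1
    rw [hd0] at this
    exact this.eventually_lt_const (by norm_num)
  have evm : ∀ᶠ i in (ω : Filter ℕ), dist ((a m).seq i) (ypre.seq i) / c i < 1/2 := by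
    have hmm : SeparationQuotient.mk (a m) = SeparationQuotient.mk ypre := by
      rw [hamk m, hfm]
    have hdm : dist (a m) ypre = 0 :=
      Metric.inseparable_iff.1 (SeparationQuotient.mk_eq_mk.1 hmm)
    have := tendsto_dist (a m) ypre
    rw [hdm] at this
    exact this.eventually_lt_const (by norm_num)
  have evj : ∀ j ∈ Set.Iio m,
      ∀ᶠ i in (ω : Filter ℕ), dist ((a j).seq i) ((a (j + 1)).seq i) / c i < 1/2 := by
    intro j hj
    have hdj : dist (a j) (a (j + 1)) < 1/2 := by
      have h1 : dist (SeparationQuotient.mk (a j)) (SeparationQuotient.mk (a (j + 1)))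
          = dist (a j) (a (j + 1)) := SeparationQuotient.dist_mk _ _
      rw [← h1, hamk j, hamk (j + 1)]
      exact hch j hj
    exact (tendsto_dist (a j) (a (j + 1))).eventually_lt_const hdj
  have evall := (Filter.eventually_all_finite (Set.finite_Iio m)).2 evj
  obtain ⟨i, hi0, hiall, him⟩ := (ev0.and (evall.and evm)).exists
  -- turn the scaled distance bounds into membership in `M (n i)`
  have hkey : ∀ b : G, b ∈ H → (wlen X b : ℝ) / c i < 1/2 → b ∈ M (n i) := by
    intro b hb hblt
    apply hmin (n i) b hb
    have hci : (0 : ℝ) < c i := hc i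
    rw [div_lt_iff₀ hci] at hblt
    have h2 : (wlen X b : ℝ) < (l i : ℝ) := by
      have : c i = (l i : ℝ) := rfl
      nlinarith [hc i]
    exact_mod_cast h2
  have hstep : ∀ j, j ≤ m → (a j).seq i ∈ M (n i) := by
    intro j
    induction j with
    | zero =>
      intro _
      have h1 : dist ((a 0).seq i) ((1 : G)) / c i < 1/2 := hi0
      have h2 : dist ((a 0).seq i) (1 : G) = dist (1 : G) ((a 0).seq i) := dist_comm _ _
      rw [h2, hdist] at h1
      simp only [inv_one, one_mul] at h1
      exact hkey _ (haH 0 i) h1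
    | succ j ih =>
      intro hjm
      have hj : j < m := by omega
      have hjM := ih (by omega)
      have h1 : dist ((a j).seq i) ((a (j + 1)).seq i) / c i < 1/2 := hiall j hj
      rw [hdist] at h1
      have hb : ((a j).seq i)⁻¹ * (a (j + 1)).seq i ∈ M (n i) :=
        hkey _ (H.mul_mem (H.inv_mem (haH j i)) (haH (j + 1) i)) h1
      have : (a (j + 1)).seq i = (a j).seq i * (((a j).seq i)⁻¹ * (a (j + 1)).seq i) := by
        group
      rw [this]
      exact (M (n i)).mul_mem hjM hb
  -- final contradiction: `hseq (n i)` lies in `M (n i)`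
  have hlast : dist ((a m).seq i) (hseq (n i)) / c i < 1/2 := him
  rw [hdist] at hlast
  have hb : ((a m).seq i)⁻¹ * hseq (n i) ∈ M (n i) :=
    hkey _ (H.mul_mem (H.inv_mem (haH m i)) (hsH (n i))) hlast
  have hfin : hseq (n i) ∈ M (n i) := by
    have : hseq (n i) = (a m).seq i * (((a m).seq i)⁻¹ * hseq (n i)) := by group
    rw [this]
    exact (M (n i)).mul_mem (hstep m le_rfl) hb
  exact hsM (n i) hfin
end

section
/- Let H be a finitely generated subgroup of a finitely generated group G. If the distortion function Δ_H^G is linear (H is undistorted), then Cone^ω_G(H) is connected (indeed path connected) for all non-principal ultrafilters ω. -/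
open Filter

/-- A chain (m-path) of length `k` from `a` to `b`. -/
def IsRPath {S : Type*} [MetricSpace S] (m : ℝ) (k : ℕ) (a b : S) (c : ℕ → S) : Prop :=
  c 0 = a ∧ c k = b ∧ ∀ i < k, dist (c i) (c (i + 1)) ≤ m

/-- `|t|_m`: the minimal length of an `m`-path from `s` to `t`. -/
noncomputable def pathLen {S : Type*} [MetricSpace S] (s : S) (m : ℝ) (t : S) : ℕ :=
  sInf {k : ℕ | ∃ c : ℕ → S, IsRPath m k s t c}

/-- `ν_S(m, n) = max { |t|_m : d(s,t) ≤ n }`. -/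
noncomputable def nu {S : Type*} [MetricSpace S] (s : S) (m n : ℝ) : ℕ :=
  sSup (pathLen s m '' {t : S | dist s t ≤ n})

/-- Admissible sequences for the asymptotic cone with scaling sequence `cᵢ = i`:
sequences at bounded scaled distance from the observation point `s`. The
ultrafilter `ω` is a parameter fixing the pseudometric below. -/
structure Precone (S : Type*) [MetricSpace S] (s : S) (ω : Ultrafilter ℕ) : Type _ where
  seq : ℕ → S
  bounded : ∃ B : ℝ, ∀ i : ℕ, 1 ≤ i → dist s (seq i) ≤ B * i

namespace Precone

variable {S : Type*} [MetricSpace S] {s : S} {ω : Ultrafilter ℕ}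

lemma bounded_div (x y : Precone S s ω) :
    ∃ B : ℝ, ∀ i : ℕ, dist (x.seq i) (y.seq i) / i ∈ Set.Icc (0:ℝ) B := by
  obtain ⟨Bx, hBx⟩ := x.bounded
  obtain ⟨By, hBy⟩ := y.bounded
  refine ⟨max (Bx + By) 0, fun i => ⟨by positivity, ?_⟩⟩
  rcases Nat.eq_zero_or_pos i with h | h
  · simp [h, le_max_right]
  · have hi : (0:ℝ) < i := by exact_mod_cast h
    have h1 : dist (x.seq i) (y.seq i) ≤ (Bx + By) * i := by
      calc dist (x.seq i) (y.seq i) ≤ dist s (x.seq i) + dist s (y.seq i) :=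
            dist_triangle_left _ _ _
        _ ≤ Bx * i + By * i := add_le_add (hBx i h) (hBy i h)
        _ = (Bx + By) * i := by ring
    have h2 : dist (x.seq i) (y.seq i) / i ≤ ((Bx + By) * i) / i := by gcongr
    have h3 : ((Bx + By) * i : ℝ) / i = Bx + By := mul_div_cancel_right₀ _ (ne_of_gt hi)
    rw [h3] at h2
    exact le_trans h2 (le_max_left _ _)

/-- The `ω`-limit defining the cone pseudometric exists. -/
lemma tendsto_pdist (x y : Precone S s ω) :
    Tendsto (fun i => dist (x.seq i) (y.seq i) / i) (ω : Filter ℕ)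
      (nhds (limUnder (ω : Filter ℕ) (fun i => dist (x.seq i) (y.seq i) / i))) := by
  obtain ⟨B, hB⟩ := bounded_div x y
  have hle : (ω.map (fun i => dist (x.seq i) (y.seq i) / i) : Filter ℝ) ≤
      Filter.principal (Set.Icc 0 B) := by
    rw [Filter.le_principal_iff]
    exact Filter.mem_map.2 (Filter.univ_mem' hB)
  obtain ⟨c, -, hc⟩ := isCompact_Icc.ultrafilter_le_nhds
    (ω.map (fun i => dist (x.seq i) (y.seq i) / i)) hle
  exact tendsto_nhds_limUnder ⟨c, hc⟩

end Precone

/-- The pseudometric `d^ω((xᵢ),(yᵢ)) = limᵂ d(xᵢ,yᵢ)/i` on admissible sequences. -/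
noncomputable instance preconePseudoMetric (S : Type*) [MetricSpace S] (s : S)
    (ω : Ultrafilter ℕ) : PseudoMetricSpace (Precone S s ω) where
  dist x y := limUnder (ω : Filter ℕ) (fun i => dist (x.seq i) (y.seq i) / i)
  dist_self x := by
    have h : (fun i : ℕ => dist (x.seq i) (x.seq i) / i) = fun _ => (0 : ℝ) := by
      funext i; simp
    show limUnder (ω : Filter ℕ) _ = 0
    rw [h]
    exact tendsto_const_nhds.limUnder_eq
  dist_comm x y := by
    show limUnder _ _ = limUnder _ _
    congr 1
    funext i
    rw [dist_comm]
  dist_triangle x y z := by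
    show limUnder (ω : Filter ℕ) _ ≤ limUnder _ _ + limUnder _ _
    have hxz := x.tendsto_pdist z
    have hxy := x.tendsto_pdist y
    have hyz := y.tendsto_pdist z
    refine le_of_tendsto_of_tendsto hxz (hxy.add hyz) (Filter.univ_mem' fun i => ?_)
    have h1 : dist (x.seq i) (z.seq i) ≤
        dist (x.seq i) (y.seq i) + dist (y.seq i) (z.seq i) := dist_triangle _ _ _
    have hi : (0:ℝ) ≤ i := Nat.cast_nonneg i
    calc dist (x.seq i) (z.seq i) / i
        ≤ (dist (x.seq i) (y.seq i) + dist (y.seq i) (z.seq i)) / i := by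
          rcases eq_or_lt_of_le hi with h | h
          · simp [← h]
          · gcongr
      _ = dist (x.seq i) (y.seq i) / i + dist (y.seq i) (z.seq i) / i := add_div _ _ _

/-- The asymptotic cone of `(S, s)` with respect to `ω` (scaling `cᵢ = i`): the metric
quotient of the admissible sequences by the pseudometric `d^ω`. -/
abbrev Cone (S : Type*) [MetricSpace S] (s : S) (ω : Ultrafilter ℕ) : Type _ :=
  SeparationQuotient (Precone S s ω)

/-- `Cone^ω_S(T)`: points of the asymptotic cone with a representative sequence all of
whose components lie in `T`. -/
def coneSet {S : Type*} [MetricSpace S] (s : S) (ω : Ultrafilter ℕ) (T : Set S) :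
    Set (Cone S s ω) :=
  {p | ∃ x : Precone S s ω, (∀ i, x.seq i ∈ T) ∧ SeparationQuotient.mk x = p}

/-! Every point of `Cone^ω_G(H)` is joined to the base point by a path inside `Cone^ω_G(H)`:
represent it by a sequence `(hᵢ)` in `H`, write `hᵢ` as a geodesic word in `Y`, and at time `t`
take the prefix consisting of the first `t`-th fraction of the letters. Consecutive prefixes
differ by one letter, which is at bounded distance from `1` since `Y` is finite, and
undistortion makes the word lengths `|hᵢ|_Y` grow at most linearly in `i`; after rescaling by
`1 / i` these paths therefore become uniformly Lipschitz in `t`. -/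

lemma isWord_wlen_of_mem_closure {G : Type*} [Group G] {A : Set G} {g : G}
    (h : g ∈ Subgroup.closure A) : IsWord A (wlen A g) g := by
  rw [← Subgroup.mem_toSubmonoid, Subgroup.closure_toSubmonoid] at h
  obtain ⟨l, hl, hprod⟩ := Submonoid.exists_list_of_mem_closure h
  exact Nat.sInf_mem (s := {k | IsWord A k g})
    ⟨l.length, l, rfl, fun a ha => (hl a ha).imp id Set.mem_inv.mp, hprod⟩

lemma isIsometricSMul_of_dist_eq {G : Type*} [Group G] [PseudoMetricSpace G] (f : G → ℝ)
    (hf : ∀ g h : G, dist g h = f (g⁻¹ * h)) : IsIsometricSMul G G where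
  isometry_smul c := Isometry.of_dist_eq fun a b => by
    simp only [smul_eq_mul, hf, mul_inv_rev, mul_assoc, inv_mul_cancel_left]

noncomputable def prefixProd {G : Type*} [Monoid G] (l : List G) (t : ℝ) : G :=
  (l.take ⌈t * l.length⌉₊).prod

@[simp]
lemma prefixProd_zero {G : Type*} [Monoid G] (l : List G) : prefixProd l 0 = 1 := by
  simp [prefixProd]

@[simp]
lemma prefixProd_one {G : Type*} [Monoid G] (l : List G) : prefixProd l 1 = l.prod := by
  simp [prefixProd]

section LeftInvariantMetric

variable {G : Type*} [Group G] [PseudoMetricSpace G] [IsIsometricSMul G G]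
  {M : ℝ} {l : List G}

lemma dist_self_mul_eq_dist_one (a b : G) : dist a (a * b) = dist 1 b := by
  simpa using dist_mul_left a 1 b

lemma dist_one_list_prod_le (hl : ∀ a ∈ l, dist 1 a ≤ M) : dist 1 l.prod ≤ M * l.length := by
  induction l with
  | nil => simp
  | cons a l ih =>
    have hrest := ih fun b hb => hl b (List.mem_cons_of_mem a hb)
    calc dist 1 (a * l.prod) ≤ dist 1 a + dist a (a * l.prod) := dist_triangle _ _ _
      _ = dist 1 a + dist 1 l.prod := by rw [dist_self_mul_eq_dist_one]
      _ ≤ M + M * l.length := add_le_add (hl a List.mem_cons_self) hrest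
      _ = M * (a :: l).length := by push_cast [List.length_cons]; ring

lemma dist_prod_take_le (hM : 0 ≤ M) (hl : ∀ a ∈ l, dist 1 a ≤ M) {m n : ℕ} (hmn : m ≤ n) :
    dist (l.take m).prod (l.take n).prod ≤ M * (n - m : ℕ) := by
  obtain ⟨k, rfl⟩ := Nat.exists_eq_add_of_le hmn
  rw [List.take_add, List.prod_append, dist_self_mul_eq_dist_one, Nat.add_sub_cancel_left]
  refine (dist_one_list_prod_le fun a ha => hl a ?_).trans ?_
  · exact List.mem_of_mem_drop (List.mem_of_mem_take ha)
  · gcongr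
    exact_mod_cast List.length_take_le _ _

lemma dist_one_prefixProd_le (hM : 0 ≤ M) (hl : ∀ a ∈ l, dist 1 a ≤ M) (t : ℝ) :
    dist 1 (prefixProd l t) ≤ M * l.length := by
  refine (dist_one_list_prod_le fun a ha => hl a (List.mem_of_mem_take ha)).trans ?_
  gcongr
  exact_mod_cast List.length_take_le' _ _

lemma dist_prefixProd_le (hM : 0 ≤ M) (hl : ∀ a ∈ l, dist 1 a ≤ M) {t t' : ℝ}
    (ht : 0 ≤ t) (ht' : 0 ≤ t') :
    dist (prefixProd l t) (prefixProd l t') ≤ M * (dist t t' * l.length + 1) := by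
  wlog htt' : t ≤ t' generalizing t t'
  · rw [dist_comm, dist_comm t]
    exact this ht' ht (le_of_not_ge htt')
  have hceil : ⌈t * l.length⌉₊ ≤ ⌈t' * l.length⌉₊ := by gcongr
  have hsteps : ((⌈t' * l.length⌉₊ - ⌈t * l.length⌉₊ : ℕ) : ℝ) ≤ dist t t' * l.length + 1 := by
    have hup : (⌈t' * l.length⌉₊ : ℝ) < t' * l.length + 1 := Nat.ceil_lt_add_one (by positivity)
    have hlow : t * l.length ≤ ⌈t * l.length⌉₊ := Nat.le_ceil _
    rw [Nat.cast_sub hceil, Real.dist_eq, abs_of_nonpos (by linarith)]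
    linarith
  calc dist (prefixProd l t) (prefixProd l t')
      ≤ M * ((⌈t' * l.length⌉₊ - ⌈t * l.length⌉₊ : ℕ) : ℝ) := dist_prod_take_le hM hl hceil
    _ ≤ M * (dist t t' * l.length + 1) := by gcongr

end LeftInvariantMetric

lemma Nonprincipal.le_atTop {ω : Ultrafilter ℕ} (hω : Nonprincipal ω) :
    (ω : Filter ℕ) ≤ atTop :=
  Nat.cofinite_eq_atTop ▸ hω

namespace Precone

variable {S : Type*} [MetricSpace S] {s : S} {ω : Ultrafilter ℕ}

def base (s : S) (ω : Ultrafilter ℕ) : Precone S s ω :=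
  ⟨fun _ => s, 0, fun i _ => by simp⟩

lemma ext_seq {x y : Precone S s ω} (h : x.seq = y.seq) : x = y := by
  cases x; cases y; simp_all

lemma dist_le_of_le_mul_add (hω : Nonprincipal ω) {x y : Precone S s ω} {a b : ℝ}
    (h : ∀ i : ℕ, 1 ≤ i → dist (x.seq i) (y.seq i) ≤ a * i + b) : dist x y ≤ a := by
  have hlim : Tendsto (fun i : ℕ => a + b / i) ω (nhds a) := by
    simpa using tendsto_const_nhds.add
      ((tendsto_const_div_atTop_nhds_zero_nat b).mono_left hω.le_atTop)
  refine le_of_tendsto_of_tendsto (x.tendsto_pdist y) hlim ?_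
  filter_upwards [hω.le_atTop (eventually_ge_atTop 1)] with i hi
  have hi0 : (0 : ℝ) < i := by exact_mod_cast hi
  rw [div_le_iff₀ hi0, add_mul, div_mul_cancel₀ _ hi0.ne']
  exact h i hi

lemma exists_le_mul_of_le_dist (x : Precone S s ω) {f : S → ℝ} {C : ℝ} (hC : 0 ≤ C)
    (hf : ∀ i, f (x.seq i) ≤ C * dist s (x.seq i) + C) :
    ∃ D : ℝ, ∀ i : ℕ, 1 ≤ i → f (x.seq i) ≤ D * i := by
  obtain ⟨B, hB⟩ := x.bounded
  refine ⟨C * B + C, fun i hi => (hf i).trans ?_⟩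
  have hi1 : (1 : ℝ) ≤ i := by exact_mod_cast hi
  nlinarith [mul_le_mul_of_nonneg_left (hB i hi) hC]

lemma joinedIn_coneSet_of_continuous {T : Set S} (z : unitInterval → Precone S s ω)
    (hz : Continuous z) (hT : ∀ t i, (z t).seq i ∈ T) :
    JoinedIn (coneSet s ω T) (SeparationQuotient.mk (z 0)) (SeparationQuotient.mk (z 1)) :=
  ⟨⟨⟨SeparationQuotient.mk ∘ z, SeparationQuotient.continuous_mk.comp hz⟩, rfl, rfl⟩,
    fun t => ⟨z t, hT t, rfl⟩⟩

end Precone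

theorem joinedIn_coneSet_of_words {G : Type*} [Group G] [MetricSpace G] [IsIsometricSMul G G]
    {ω : Ultrafilter ℕ} (hω : Nonprincipal ω) (H : Submonoid G) {M D : ℝ} (hM : 0 ≤ M)
    {x : Precone G 1 ω} (l : ℕ → List G) (hprod : ∀ i, (l i).prod = x.seq i)
    (hH : ∀ i, ∀ a ∈ l i, a ∈ H) (hl : ∀ i, ∀ a ∈ l i, dist 1 a ≤ M)
    (hlen : ∀ i : ℕ, 1 ≤ i → ((l i).length : ℝ) ≤ D * i) :
    JoinedIn (coneSet 1 ω H) (SeparationQuotient.mk (Precone.base 1 ω))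
      (SeparationQuotient.mk x) := by
  have hMD : ∀ i : ℕ, 1 ≤ i → M * (l i).length ≤ M * D * i := fun i hi => by
    rw [mul_assoc]; gcongr; exact hlen i hi
  let z : unitInterval → Precone G 1 ω := fun t =>
    ⟨fun i => prefixProd (l i) t, M * D,
      fun i hi => (dist_one_prefixProd_le hM (hl i) t).trans (hMD i hi)⟩
  have hz : LipschitzWith (M * D).toNNReal z := .of_dist_le_mul fun t t' => by
    refine Precone.dist_le_of_le_mul_add hω (b := M) fun i hi => ?_
    calc dist ((z t).seq i) ((z t').seq i) ≤ M * (dist (t : ℝ) t' * (l i).length + 1) :=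
          dist_prefixProd_le hM (hl i) t.2.1 t'.2.1
      _ = dist t t' * (M * (l i).length) + M := by rw [Subtype.dist_eq]; ring
      _ ≤ dist t t' * (M * D * i) + M :=
          (add_le_add_iff_right M).2 (mul_le_mul_of_nonneg_left (hMD i hi) dist_nonneg)
      _ ≤ (M * D).toNNReal * dist t t' * i + M := by
          have hdi : 0 ≤ dist t t' * i := by positivity
          nlinarith [Real.le_coe_toNNReal (M * D)]
  have hz0 : z 0 = Precone.base 1 ω := Precone.ext_seq (funext fun i => prefixProd_zero (l i))
  have hz1 : z 1 = x := Precone.ext_seq (funext fun i => (prefixProd_one (l i)).trans (hprod i))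
  rw [← hz0, ← hz1]
  exact Precone.joinedIn_coneSet_of_continuous z hz.continuous fun t i =>
    H.list_prod_mem fun a ha => hH i a (List.mem_of_mem_take ha)

theorem coneSet_pathConnected_of_undistorted_general {G : Type*} [Group G] [MetricSpace G]
    (X Y : Set G) (hYfin : Y.Finite)
    (H : Subgroup G) (hYgen : Subgroup.closure Y = H)
    (hdist : ∀ g h : G, dist g h = wlen X (g⁻¹ * h))
    (hundist : ∃ C : ℕ, 0 < C ∧ ∀ h ∈ H, wlen Y h ≤ C * wlen X h + C) :
    ∀ ω : Ultrafilter ℕ, Nonprincipal ω →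
      IsPathConnected (coneSet (1 : G) ω (H : Set G)) := by
  intro ω hω
  have := isIsometricSMul_of_dist_eq (fun g => (wlen X g : ℝ)) hdist
  obtain ⟨C, -, hC⟩ := hundist
  obtain ⟨M, hM⟩ := ((hYfin.union hYfin.inv).image (dist (1 : G))).bddAbove
  have hletter : ∀ a : G, a ∈ Y ∨ a⁻¹ ∈ Y → a ∈ H ∧ dist 1 a ≤ max M 0 := fun a ha =>
    ⟨hYgen ▸ ha.elim (Subgroup.subset_closure ·) fun h =>
        (Subgroup.closure Y).inv_mem_iff.mp (Subgroup.subset_closure h),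
      (hM ⟨a, ha.imp id Set.mem_inv.mpr, rfl⟩).trans (le_max_left M 0)⟩
  refine ⟨_, ⟨Precone.base 1 ω, fun _ => H.one_mem, rfl⟩, ?_⟩
  rintro _ ⟨x, hxH, rfl⟩
  choose l hlen hY hprod using fun i => isWord_wlen_of_mem_closure (hYgen ▸ hxH i)
  obtain ⟨D, hD⟩ := x.exists_le_mul_of_le_dist (f := fun g => (wlen Y g : ℝ)) (Nat.cast_nonneg C)
    fun i => by simpa [hdist] using (Nat.cast_le (α := ℝ)).2 (hC _ (hxH i))
  exact joinedIn_coneSet_of_words hω H.toSubmonoid (le_max_right M 0) l hprod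
    (fun i a ha => (hletter a (hY i a ha)).1) (fun i a ha => (hletter a (hY i a ha)).2)
    fun i hi => hlen i ▸ hD i hi

/-- if a finitely generated subgroup `H` of a finitely generated group
`G` (with the word metric of `X`) is undistorted (linear distortion function), then
`Cone^ω_G(H)` is path connected (in particular connected) for every non-principal
ultrafilter `ω`. -/
theorem coneSet_pathConnected_of_undistorted {G : Type*} [Group G] [MetricSpace G]
    (X Y : Set G) (hXfin : X.Finite) (hYfin : Y.Finite)
    (hXgen : Subgroup.closure X = ⊤)
    (H : Subgroup G) (hYH : Y ⊆ (H : Set G)) (hYgen : Subgroup.closure Y = H)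
    (hdist : ∀ g h : G, dist g h = wlen X (g⁻¹ * h))
    (hundist : ∃ C : ℕ, 0 < C ∧ ∀ h ∈ H, wlen Y h ≤ C * wlen X h + C) :
    ∀ ω : Ultrafilter ℕ, Nonprincipal ω →
      IsPathConnected (coneSet (1 : G) ω (H : Set G)) :=
  coneSet_pathConnected_of_undistorted_general X Y hYfin H hYgen hdist hundist
end
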